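/- arXiv:2307.04951 — 2 statements merged into one kernel-verified Lean document; each statement's English description precedes it below -/
import Mathlib

section
/- Let D = {z ∈ ℂ : |z| < 1} and define T f(z) = ∫_D k(z,w) f(w) dA(w), where k(z,w) = (1 − |w|²)/(π (z − w)(1 − z·conj(w))). Then there exists an absolute constant C > 0 such that for every p with 2 < p < ∞ and every f ∈ L^p(D): the integral defining T f(z) converges absolutely for every z ∈ D and sup_{z ∈ D} |T f(z)| ≤ C · ((p−1)/(p−2)) · ‖f‖_{L^p(D)}; moreover for every f ∈ L^∞(D), sup_{z ∈ D} |T f(z)| ≤ C ‖f‖_{L^∞(D)}. -/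
open MeasureTheory Complex Metric Set ENNReal

noncomputable section

/-- The unit disc `D ⊂ ℂ`. -/
def unitD : Set ℂ := Metric.ball (0 : ℂ) 1

/-- The kernel `k(z,w) = (1-|w|²)/(π (z-w)(1-z w̄))`, i.e. `∂G/∂z` for the Green's function
of `∂²/∂z∂z̄` on the unit disc. -/
def kD (z w : ℂ) : ℂ :=
  ((1 - ‖w‖ ^ 2 : ℝ) : ℂ) /
    ((Real.pi : ℂ) * (z - w) * (1 - z * (starRingEnd ℂ) w))

/-- The Bergman kernel `K(z,w) = 1/(π (1-z w̄)²)` of the unit disc. -/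
def KD (z w : ℂ) : ℂ :=
  1 / ((Real.pi : ℂ) * (1 - z * (starRingEnd ℂ) w) ^ 2)

/-- The Wirtinger derivative `∂φ/∂z̄ = ½(∂φ/∂x + i ∂φ/∂y)` of `φ : ℂ → ℂ`. -/
def wbar1 (φ : ℂ → ℂ) (z : ℂ) : ℂ :=
  (1 / 2 : ℂ) * (fderiv ℝ φ z 1 + Complex.I * fderiv ℝ φ z Complex.I)

/-- The Wirtinger derivative `∂φ/∂z = ½(∂φ/∂x − i ∂φ/∂y)` of `φ : ℂ → ℂ`. -/
def wz1 (φ : ℂ → ℂ) (z : ℂ) : ℂ :=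
  (1 / 2 : ℂ) * (fderiv ℝ φ z 1 - Complex.I * fderiv ℝ φ z Complex.I)

/-- The Wirtinger derivative `∂φ/∂z̄_j` of `φ : ℂⁿ → ℂ` in the `j`-th coordinate. -/
def wbar {n : ℕ} (φ : (Fin n → ℂ) → ℂ) (j : Fin n) (z : Fin n → ℂ) : ℂ :=
  (1 / 2 : ℂ) * (fderiv ℝ φ z (Pi.single j 1) + Complex.I * fderiv ℝ φ z (Pi.single j Complex.I))

/-- The product domain `Ωⁿ ⊆ ℂⁿ`. -/
def poly (n : ℕ) (Ω : Set ℂ) : Set (Fin n → ℂ) := Set.univ.pi fun _ => Ω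

/-! On `D` the kernel is dominated by the Newtonian one, `|k(z,w)| ≤ (2/π) |z - w|⁻¹`, because
`1 - |w|² ≤ 2 (1 - |z| |w|) ≤ 2 |1 - z w̄|`. In polar coordinates around `z`,
`∫_D |z - w|^(-q) dA(w) ≤ 8π / (2 - q)` for `0 ≤ q < 2`, so for `1 ≤ q < 2` the `L^q(D)` norm of
`k(z, ·)` is at most `16 / (2 - q)`. Hölder's inequality with the conjugate exponent `q = p/(p-1)`
then bounds `|T f(z)|` by `16 / (2 - q) · ‖f‖_p`, and `1 / (2 - q) = (p - 1)/(p - 2)`; the case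
`p = ∞` is `q = 1`. -/

lemma norm_kD_le {z w : ℂ} (hz : z ∈ unitD) (hw : w ∈ unitD) :
    ‖kD z w‖ ≤ 2 / Real.pi * ‖z - w‖⁻¹ := by
  rw [unitD, mem_ball_zero_iff] at hz hw
  have hden : 1 - ‖z‖ * ‖w‖ ≤ ‖1 - z * (starRingEnd ℂ) w‖ := by
    simpa using norm_sub_norm_le (1 : ℂ) (z * (starRingEnd ℂ) w)
  have hnum : 1 - ‖w‖ ^ 2 ≤ 2 * (1 - ‖z‖ * ‖w‖) := by
    nlinarith [norm_nonneg z, norm_nonneg w]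
  have hnum_nonneg : 0 ≤ 1 - ‖w‖ ^ 2 := by nlinarith [norm_nonneg w]
  rw [kD, norm_div, norm_mul, norm_mul, Complex.norm_real, Complex.norm_real,
    Real.norm_of_nonneg hnum_nonneg, Real.norm_of_nonneg Real.pi_pos.le]
  rcases eq_or_ne z w with rfl | hne
  · simp
  have hzw : 0 < ‖z - w‖ := norm_pos_iff.2 (sub_ne_zero.2 hne)
  have hd : 0 < 1 - ‖z‖ * ‖w‖ := by nlinarith [norm_nonneg z, norm_nonneg w]
  rw [div_le_iff₀ (mul_pos (by positivity) (hd.trans_le hden))]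
  calc 1 - ‖w‖ ^ 2 ≤ 2 * ‖1 - z * (starRingEnd ℂ) w‖ := by linarith
    _ = 2 / Real.pi * ‖z - w‖⁻¹ * (Real.pi * ‖z - w‖ * ‖1 - z * (starRingEnd ℂ) w‖) := by
      field_simp

lemma measurable_kD (z : ℂ) : Measurable (kD z) := by
  unfold kD
  fun_prop

lemma setLIntegral_ball_zero_norm_rpow_neg {R t : ℝ} (hR : 0 ≤ R) (ht : t < 2) :
    ∫⁻ x in ball (0 : ℂ) R, ENNReal.ofReal (‖x‖ ^ (-t)) =
      ENNReal.ofReal (2 * Real.pi * (R ^ (2 - t) / (2 - t))) := by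
  have hpolar : ∀ p ∈ polarCoord.target,
      ENNReal.ofReal p.1 • (ball (0 : ℂ) R).indicator (fun x => ENNReal.ofReal (‖x‖ ^ (-t)))
        (Complex.polarCoord.symm p) =
        (Iio R).indicator (fun r => ENNReal.ofReal (r ^ (1 - t))) p.1 * 1 := by
    rintro ⟨r, θ⟩ ⟨hr, -⟩
    have hr : 0 < r := hr
    have hnorm : ‖Complex.polarCoord.symm (r, θ)‖ = r := by
      rw [norm_polarCoord_symm, abs_of_pos hr]
    simp only [indicator, mem_ball_zero_iff, hnorm, mem_Iio, mul_one, smul_eq_mul]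
    split_ifs
    · rw [← ENNReal.ofReal_mul hr.le, Real.rpow_sub hr, Real.rpow_one, Real.rpow_neg hr.le,
        div_eq_mul_inv]
    · rw [mul_zero]
  have hradial : ∫⁻ r in Ioo 0 R, ENNReal.ofReal (r ^ (1 - t)) =
      ENNReal.ofReal (R ^ (2 - t) / (2 - t)) := by
    rcases hR.eq_or_lt with rfl | hR
    · simp [Real.zero_rpow (by linarith : (2 - t) ≠ 0)]
    rw [← ofReal_integral_eq_lintegral_ofReal
      ((intervalIntegral.integrableOn_Ioo_rpow_iff hR).2 (by linarith))
      ((ae_restrict_iff' measurableSet_Ioo).2 (.of_forall fun r hr => Real.rpow_nonneg hr.1.le _)),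
      ← integral_Ioc_eq_integral_Ioo, ← intervalIntegral.integral_of_le hR.le,
      integral_rpow (Or.inl (by linarith)), Real.zero_rpow (by linarith)]
    ring_nf
  rw [← lintegral_indicator measurableSet_ball, ← Complex.lintegral_comp_polarCoord_symm,
    setLIntegral_congr_fun polarCoord.open_target.measurableSet hpolar,
    polarCoord_target, Measure.volume_eq_prod, ← Measure.prod_restrict,
    lintegral_prod_mul (g := fun _ : ℝ => (1 : ℝ≥0∞))
      ((by fun_prop : Measurable _).indicator measurableSet_Iio).aemeasurable aemeasurable_const,
    setLIntegral_indicator measurableSet_Iio,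
    Iio_inter_Ioi, hradial, setLIntegral_one, Real.volume_Ioo,
    ← ENNReal.ofReal_mul (by positivity)]
  ring_nf

lemma setLIntegral_unitD_norm_sub_rpow_neg_le {z : ℂ} (hz : z ∈ unitD) {t : ℝ} (ht0 : 0 ≤ t)
    (ht : t < 2) :
    ∫⁻ w in unitD, ENNReal.ofReal (‖z - w‖ ^ (-t)) ≤ ENNReal.ofReal (8 * Real.pi / (2 - t)) := by
  set F : ℂ → ℝ≥0∞ := fun x => ENNReal.ofReal (‖x‖ ^ (-t))
  have hsub : unitD ⊆ ball z 2 := fun w hw => by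
    rw [unitD, mem_ball_zero_iff] at hz hw
    rw [mem_ball, dist_eq_norm]
    linarith [norm_sub_le w z]
  have htranslate : ∫⁻ w in ball z 2, F (z - w) = ∫⁻ x in ball 0 2, F x := by
    rw [← lintegral_indicator measurableSet_ball, ← lintegral_indicator measurableSet_ball,
      ← lintegral_sub_left_eq_self _ z]
    congr with w
    simp [indicator, dist_eq_norm]
  have hpow : (2 : ℝ) ^ (2 - t) ≤ 4 := by
    calc (2 : ℝ) ^ (2 - t) ≤ 2 ^ (2 : ℝ) :=
          Real.rpow_le_rpow_of_exponent_le one_le_two (by linarith)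
      _ = 4 := by norm_num
  calc ∫⁻ w in unitD, F (z - w) ≤ ∫⁻ w in ball z 2, F (z - w) := lintegral_mono_set hsub
    _ = ENNReal.ofReal (2 * Real.pi * (2 ^ (2 - t) / (2 - t))) := by
      rw [htranslate, setLIntegral_ball_zero_norm_rpow_neg zero_le_two ht]
    _ ≤ ENNReal.ofReal (8 * Real.pi / (2 - t)) := by
      gcongr
      have : 0 < 2 - t := by linarith
      rw [mul_div_assoc', div_le_div_iff_of_pos_right this]
      nlinarith [Real.pi_pos]

lemma eLpNorm_inv_norm_sub_le {z : ℂ} (hz : z ∈ unitD) {q : ℝ} (hq : 1 ≤ q) (hq2 : q < 2) :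
    eLpNorm (fun w => ‖z - w‖⁻¹) (ENNReal.ofReal q) (volume.restrict unitD) ≤
      ENNReal.ofReal (8 * Real.pi / (2 - q)) := by
  have hq0 : 0 < q := by linarith
  have hone : 1 ≤ 8 * Real.pi / (2 - q) := by
    rw [le_div_iff₀ (by linarith)]
    nlinarith [Real.pi_gt_three]
  have henorm : ∀ w, ‖‖z - w‖⁻¹‖ₑ ^ q = ENNReal.ofReal (‖z - w‖ ^ (-q)) := fun w => by
    rw [Real.enorm_of_nonneg (by positivity),
      ENNReal.ofReal_rpow_of_nonneg (by positivity) hq0.le, Real.inv_rpow (norm_nonneg _),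
      Real.rpow_neg (norm_nonneg _)]
  rw [eLpNorm_eq_lintegral_rpow_enorm_toReal (by simpa using hq0) ofReal_ne_top,
    ENNReal.toReal_ofReal hq0.le]
  simp_rw [henorm]
  calc (∫⁻ w in unitD, ENNReal.ofReal (‖z - w‖ ^ (-q))) ^ (1 / q)
      ≤ ENNReal.ofReal (8 * Real.pi / (2 - q)) ^ (1 / q) :=
        ENNReal.rpow_le_rpow (setLIntegral_unitD_norm_sub_rpow_neg_le hz (by linarith) hq2)
          (by positivity)
    _ ≤ ENNReal.ofReal (8 * Real.pi / (2 - q)) := by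
      rw [ENNReal.ofReal_rpow_of_nonneg (by positivity) (by positivity)]
      exact ENNReal.ofReal_le_ofReal
        (Real.rpow_le_self_of_one_le hone ((div_le_one hq0).2 hq))

lemma eLpNorm_kD_le {z : ℂ} (hz : z ∈ unitD) {q : ℝ} (hq : 1 ≤ q) (hq2 : q < 2) :
    eLpNorm (kD z) (ENNReal.ofReal q) (volume.restrict unitD) ≤
      ENNReal.ofReal (16 / (2 - q)) := by
  have hdom : ∀ᵐ w ∂volume.restrict unitD,
      ‖kD z w‖ ≤ ‖((2 / Real.pi) • fun w => ‖z - w‖⁻¹) w‖ := by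
    filter_upwards [ae_restrict_mem measurableSet_ball] with w hw
    rw [Pi.smul_apply, smul_eq_mul, Real.norm_of_nonneg (by positivity)]
    exact norm_kD_le hz hw
  calc eLpNorm (kD z) (ENNReal.ofReal q) (volume.restrict unitD)
      ≤ ‖2 / Real.pi‖ₑ *
          eLpNorm (fun w => ‖z - w‖⁻¹) (ENNReal.ofReal q) (volume.restrict unitD) := by
        rw [← eLpNorm_const_smul]
        exact eLpNorm_mono_ae hdom
    _ ≤ ENNReal.ofReal (2 / Real.pi) * ENNReal.ofReal (8 * Real.pi / (2 - q)) := by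
        rw [Real.enorm_of_nonneg (by positivity)]
        gcongr
        exact eLpNorm_inv_norm_sub_le hz hq hq2
    _ = ENNReal.ofReal (16 / (2 - q)) := by
        rw [← ENNReal.ofReal_mul (by positivity)]
        congr 1
        field_simp
        ring

lemma memLp_kD {z : ℂ} (hz : z ∈ unitD) {q : ℝ} (hq : 1 ≤ q) (hq2 : q < 2) :
    MemLp (kD z) (ENNReal.ofReal q) (volume.restrict unitD) :=
  ⟨(measurable_kD z).aestronglyMeasurable, (eLpNorm_kD_le hz hq hq2).trans_lt ofReal_lt_top⟩

lemma integrable_kD_mul {z : ℂ} (hz : z ∈ unitD) {q : ℝ} (hq : 1 ≤ q) (hq2 : q < 2)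
    {p : ℝ≥0∞} [HolderConjugate (ENNReal.ofReal q) p] {f : ℂ → ℂ}
    (hf : MemLp f p (volume.restrict unitD)) :
    Integrable (fun w => kD z w * f w) (volume.restrict unitD) :=
  memLp_one_iff_integrable.1 (hf.mul' (memLp_kD hz hq hq2))

lemma norm_integral_kD_mul_le {z : ℂ} (hz : z ∈ unitD) {q : ℝ} (hq : 1 ≤ q) (hq2 : q < 2)
    {p : ℝ≥0∞} [HolderConjugate (ENNReal.ofReal q) p] {f : ℂ → ℂ}
    (hf : MemLp f p (volume.restrict unitD)) :
    ‖∫ w in unitD, kD z w * f w‖ ≤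
      16 / (2 - q) * (eLpNorm f p (volume.restrict unitD)).toReal := by
  have hk := memLp_kD hz hq hq2
  have hholder :=
    eLpNorm_smul_le_mul_eLpNorm (p := ENNReal.ofReal q) (q := p) (r := 1) hf.1 hk.1
  calc ‖∫ w in unitD, kD z w * f w‖ ≤ ∫ w in unitD, ‖kD z w * f w‖ :=
        norm_integral_le_integral_norm _
    _ = (eLpNorm (kD z • f) 1 (volume.restrict unitD)).toReal := by
        rw [integral_norm_eq_lintegral_enorm (f := fun w => kD z w * f w) (hk.1.mul hf.1),
          eLpNorm_one_eq_lintegral_enorm]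
        rfl
    _ ≤ (eLpNorm (kD z) (ENNReal.ofReal q) (volume.restrict unitD) *
          eLpNorm f p (volume.restrict unitD)).toReal :=
        ENNReal.toReal_mono (ENNReal.mul_ne_top hk.2.ne hf.2.ne) hholder
    _ ≤ 16 / (2 - q) * (eLpNorm f p (volume.restrict unitD)).toReal := by
        rw [ENNReal.toReal_mul]
        gcongr
        exact ENNReal.toReal_le_of_le_ofReal (div_nonneg (by norm_num) (by linarith))
          (eLpNorm_kD_le hz hq hq2)

/-- **Proposition 3.1(iii) on the unit disc.** There is an absolute constant `C` such that
`sup_D |T f| ≤ C (p-1)/(p-2) ‖f‖_{L^p(D)}` for `2 < p < ∞`, and `sup_D |T f| ≤ C ‖f‖_{L^∞(D)}`. -/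
theorem T_sup_norm_bound :
    ∃ C : ℝ, 0 < C ∧
      (∀ p : ℝ, 2 < p →
        ∀ f : ℂ → ℂ, MemLp f (ENNReal.ofReal p) (volume.restrict unitD) →
          (∀ z ∈ unitD, Integrable (fun w => kD z w * f w) (volume.restrict unitD)) ∧
          (∀ z ∈ unitD, ‖∫ w in unitD, kD z w * f w‖ ≤
            C * ((p - 1) / (p - 2)) *
              (eLpNorm f (ENNReal.ofReal p) (volume.restrict unitD)).toReal)) ∧
      (∀ f : ℂ → ℂ, MemLp f ⊤ (volume.restrict unitD) →
        (∀ z ∈ unitD, Integrable (fun w => kD z w * f w) (volume.restrict unitD)) ∧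
        (∀ z ∈ unitD, ‖∫ w in unitD, kD z w * f w‖ ≤
          C * (eLpNorm f ⊤ (volume.restrict unitD)).toReal)) := by
  refine ⟨16, by norm_num, fun p hp f hf => ?_, fun f hf => ?_⟩
  · have hpq : p.conjExponent.HolderConjugate p :=
      (Real.HolderConjugate.conjExponent (by linarith)).symm
    have := hpq.ennrealOfReal
    have hq : 1 ≤ p.conjExponent := hpq.lt.le
    have hq2 : p.conjExponent < 2 := by
      rw [Real.conjExponent, div_lt_iff₀ (by linarith)]
      linarith
    have hconst : 16 / (2 - p.conjExponent) = 16 * ((p - 1) / (p - 2)) := by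
      have : p - 1 ≠ 0 := by linarith
      have : p - 2 ≠ 0 := by linarith
      rw [Real.conjExponent, show 2 - p / (p - 1) = (p - 2) / (p - 1) by field_simp; ring]
      field_simp
    refine ⟨fun z hz => integrable_kD_mul hz hq hq2 hf, fun z hz => ?_⟩
    simpa [hconst] using norm_integral_kD_mul_le hz hq hq2 hf
  · have : HolderConjugate (ENNReal.ofReal 1) ⊤ := by
      rw [ENNReal.ofReal_one]
      infer_instance
    refine ⟨fun z hz => integrable_kD_mul hz le_rfl one_lt_two hf, fun z hz => ?_⟩
    convert norm_integral_kD_mul_le hz le_rfl one_lt_two hf using 2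
    norm_num

end
end

section
/- Let D = {z ∈ ℂ : |z| < 1} and k(z,w) = (1 − |w|²)/(π (z − w)(1 − z·conj(w))). For z = (z_1,z_2), w = (w_1,w_2) ∈ D × D set τ(z,w) = |z_1 − w_1|² + |z_2 − w_2|², and define b^{1,2}(z,w) = ∂/∂w̄_2 [ k(z_2, w_2) · |w_2 − z_2|² / τ(z,w) ] and b^{2,1}(z,w) = ∂/∂w̄_1 [ k(z_1, w_1) · |w_1 − z_1|² / τ(z,w) ], where ∂/∂w̄_j denotes the Wirtinger derivative in w_j. Then there exists an absolute constant C > 0 such that for all z, w ∈ D × D with z_1 ≠ w_1 and z_2 ≠ w_2: |b^{1,2}(z,w)| ≤ C/τ(z,w), |b^{2,1}(z,w)| ≤ C/τ(z,w), and |k(z_2,w_2)·b^{2,1}(z,w)| + |k(z_1,w_1)·b^{1,2}(z,w)| ≤ C / (|z_1 − w_1|^{3/2} |z_2 − w_2|^{3/2}). -/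
open MeasureTheory Complex Metric Set ENNReal

noncomputable section

/-- `τ(z,w) = |z₁-w₁|² + |z₂-w₂|²`. -/
def tau2 (z₁ z₂ w₁ w₂ : ℂ) : ℝ :=
  ‖z₁ - w₁‖ ^ 2 + ‖z₂ - w₂‖ ^ 2

/-- `b^{1,2}(z,w) = ∂/∂w̄₂ [k(z₂,w₂)|w₂-z₂|²/τ(z,w)]`. -/
def b12 (z₁ z₂ w₁ w₂ : ℂ) : ℂ :=
  wbar1 (fun v => kD z₂ v * ((‖v - z₂‖ ^ 2 : ℝ) : ℂ) /
    ((tau2 z₁ z₂ w₁ v : ℝ) : ℂ)) w₂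

/-- `b^{2,1}(z,w) = ∂/∂w̄₁ [k(z₁,w₁)|w₁-z₁|²/τ(z,w)]`. -/
def b21 (z₁ z₂ w₁ w₂ : ℂ) : ℂ :=
  wbar1 (fun v => kD z₁ v * ((‖v - z₁‖ ^ 2 : ℝ) : ℂ) /
    ((tau2 z₁ z₂ v w₂ : ℝ) : ℂ)) w₁

lemma wbar1_formula (φ : ℂ → ℂ) (G : ℂ → ℂ → ℂ) (z : ℂ) (D : ℂ)
    (hG : DifferentiableAt ℂ (fun p : ℂ × ℂ => G p.1 p.2) (z, (starRingEnd ℂ) z))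
    (h : ∀ᶠ v in nhds z, φ v = G v ((starRingEnd ℂ) v))
    (hD : HasDerivAt (fun c => G z c) D ((starRingEnd ℂ) z)) :
    wbar1 φ z = D := by
  set p : ℂ × ℂ := (z, (starRingEnd ℂ) z)
  set L := fderiv ℂ (fun p : ℂ × ℂ => G p.1 p.2) p with hL
  -- derivative of the slice equals L (0,1)
  have hslice : HasFDerivAt (fun c : ℂ => G z c)
      (L.comp ((0 : ℂ →L[ℂ] ℂ).prod (ContinuousLinearMap.id ℂ ℂ))) ((starRingEnd ℂ) z) := by
    have h1 : HasFDerivAt (fun c : ℂ => ((z, c) : ℂ × ℂ))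
        ((0 : ℂ →L[ℂ] ℂ).prod (ContinuousLinearMap.id ℂ ℂ)) ((starRingEnd ℂ) z) :=
      HasFDerivAt.prodMk (hasFDerivAt_const z _) (hasFDerivAt_id _)
    exact (hG.hasFDerivAt.comp _ h1 : _)
  have hD' : D = L ((0 : ℂ), (1 : ℂ)) := by
    have := hslice.hasDerivAt.unique hD
    simpa using this.symm
  -- real derivative of φ
  have hM : HasFDerivAt (fun v : ℂ => ((v, (starRingEnd ℂ) v) : ℂ × ℂ))
      ((ContinuousLinearMap.id ℝ ℂ).prod (Complex.conjCLE.toContinuousLinearMap)) z :=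
    ((ContinuousLinearMap.id ℝ ℂ).prod (Complex.conjCLE.toContinuousLinearMap)).hasFDerivAt
  have hcomp : HasFDerivAt (fun v => G v ((starRingEnd ℂ) v))
      ((L.restrictScalars ℝ).comp ((ContinuousLinearMap.id ℝ ℂ).prod (Complex.conjCLE.toContinuousLinearMap))) z :=
    HasFDerivAt.comp (g := fun p : ℂ × ℂ => G p.1 p.2) z (hG.hasFDerivAt.restrictScalars ℝ) hM
  have hφ : HasFDerivAt φ
      ((L.restrictScalars ℝ).comp ((ContinuousLinearMap.id ℝ ℂ).prod (Complex.conjCLE.toContinuousLinearMap))) z :=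
    hcomp.congr_of_eventuallyEq h
  rw [wbar1, hφ.fderiv, hD']
  simp only [ContinuousLinearMap.coe_comp', Function.comp_apply, ContinuousLinearMap.prod_apply,
    ContinuousLinearMap.coe_id', id_eq, ContinuousLinearMap.coe_restrictScalars',
    ContinuousLinearEquiv.coe_coe, Complex.conjCLE_apply, Complex.conj_I, map_one]
  have e1 : ((1:ℂ), (1:ℂ)) = ((1:ℂ),(0:ℂ)) + ((0:ℂ),(1:ℂ)) := by simp
  have e2 : ((Complex.I), -Complex.I) = Complex.I • ((1:ℂ),(0:ℂ)) + (-Complex.I) • ((0:ℂ),(1:ℂ)) := by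
    simp
  rw [e1, e2, map_add, map_add, _root_.map_smul, _root_.map_smul]
  simp only [smul_eq_mul]
  linear_combination (L ((1:ℂ),(0:ℂ)) - L ((0:ℂ),(1:ℂ)))/2 * Complex.I_mul_I

lemma disc_key (Z v : ℂ) (hZ : ‖Z‖ < 1) (hv : ‖v‖ < 1) :
    ‖v - Z‖ ≤ ‖1 - Z * (starRingEnd ℂ) v‖ := by
  have h : Complex.normSq (1 - Z * (starRingEnd ℂ) v) - Complex.normSq (v - Z)
      = (1 - Complex.normSq Z) * (1 - Complex.normSq v) := by
    simp [Complex.normSq_apply, Complex.mul_re, Complex.mul_im]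
    ring
  have hZ' : Complex.normSq Z < 1 := by
    have := Complex.sq_norm Z; nlinarith [norm_nonneg Z]
  have hv' : Complex.normSq v < 1 := by
    have := Complex.sq_norm v; nlinarith [norm_nonneg v]
  have : Complex.normSq (v - Z) ≤ Complex.normSq (1 - Z * (starRingEnd ℂ) v) := by nlinarith
  have := Real.sqrt_le_sqrt this
  simpa [Complex.norm_def] using this

lemma disc_key2 (Z v : ℂ) (hZ : ‖Z‖ < 1) (hv : ‖v‖ < 1) :
    1 - ‖v‖ ^ 2 ≤ 2 * ‖1 - Z * (starRingEnd ℂ) v‖ := by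
  have h1 : ‖(1:ℂ)‖ - ‖Z * (starRingEnd ℂ) v‖ ≤
      ‖1 - Z * (starRingEnd ℂ) v‖ := by
    have := abs_norm_sub_norm_le 1 (Z * (starRingEnd ℂ) v)
    calc ‖(1:ℂ)‖ - ‖Z * (starRingEnd ℂ) v‖ ≤
        |‖(1:ℂ)‖ - ‖Z * (starRingEnd ℂ) v‖| := le_abs_self _
      _ ≤ _ := abs_norm_sub_norm_le 1 (Z * (starRingEnd ℂ) v)
  simp only [norm_one, norm_mul, Complex.norm_conj] at h1
  nlinarith [norm_nonneg Z, norm_nonneg v, norm_nonneg (1 - Z * (starRingEnd ℂ) v)]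

lemma one_sub_mul_conj_ne (Z v : ℂ) (hZ : ‖Z‖ < 1) (hv : ‖v‖ < 1) :
    (1 : ℂ) - Z * (starRingEnd ℂ) v ≠ 0 := by
  intro h
  have h2 : Z * (starRingEnd ℂ) v = 1 := by linear_combination -h
  have := congrArg (‖·‖) h2
  simp only [norm_mul, Complex.norm_conj, norm_one] at this
  nlinarith [norm_nonneg Z, norm_nonneg v]

lemma absSqC (z : ℂ) : ((‖z‖ ^ 2 : ℝ) : ℂ) = z * (starRingEnd ℂ) z := by
  rw [Complex.sq_norm]; exact (Complex.mul_conj z).symm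

lemma master (Z W : ℂ) (a : ℝ) (hZ : ‖Z‖ < 1) (hW : ‖W‖ < 1)
    (hne : Z ≠ W) (ha : 0 ≤ a) :
    ‖wbar1 (fun v => kD Z v * ((‖v - Z‖ ^ 2 : ℝ) : ℂ) /
      (((a + ‖Z - v‖ ^ 2 : ℝ)) : ℂ)) W‖ ≤ 7 / (a + ‖Z - W‖ ^ 2) := by
  have hπ := Real.pi_gt_three
  set c₀ : ℂ := (starRingEnd ℂ) W with hc₀
  set G : ℂ → ℂ → ℂ := fun v c =>
    -((1 - v * c) * (c - (starRingEnd ℂ) Z)) /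
      ((Real.pi : ℂ) * (1 - Z * c) * ((a : ℂ) + (v - Z) * (c - (starRingEnd ℂ) Z))) with hGdef
  have hWZ : W - Z ≠ 0 := sub_ne_zero.mpr (Ne.symm hne)
  have hs : 0 < ‖W - Z‖ := by
    simpa using (norm_pos_iff.mpr hWZ)
  set s : ℝ := ‖W - Z‖ with hsdef
  set q : ℝ := ‖1 - Z * c₀‖ with hqdef
  set m : ℝ := 1 - ‖W‖ ^ 2 with hmdef
  set τ : ℝ := a + s ^ 2 with hτdef
  have hm : 0 < m := by
    have := norm_nonneg W; nlinarith
  have hτ : 0 < τ := by positivity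
  have hq : 0 < q := by
    rw [hqdef]; exact norm_pos_iff.mpr (one_sub_mul_conj_ne Z W hZ hW)
  have hqs : s ≤ q := disc_key Z W hZ hW
  have hqm : m ≤ 2 * q := disc_key2 Z W hZ hW
  -- cast identity for τ
  have eτ : ((τ : ℝ) : ℂ) = (a : ℂ) + (W - Z) * (c₀ - (starRingEnd ℂ) Z) := by
    rw [hτdef, hsdef, hc₀, Complex.ofReal_add, absSqC, map_sub]
  have hτC : ((τ : ℝ) : ℂ) ≠ 0 := Complex.ofReal_ne_zero.mpr (ne_of_gt hτ)
  have hπC : ((Real.pi : ℝ) : ℂ) ≠ 0 := Complex.ofReal_ne_zero.mpr Real.pi_ne_zero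
  have hZc : (1 : ℂ) - Z * c₀ ≠ 0 := one_sub_mul_conj_ne Z W hZ hW
  -- eventual equality
  have hev : ∀ᶠ v in nhds W, (kD Z v * ((‖v - Z‖ ^ 2 : ℝ) : ℂ) /
      (((a + ‖Z - v‖ ^ 2 : ℝ)) : ℂ)) = G v ((starRingEnd ℂ) v) := by
    have h1 : ∀ᶠ v in nhds W, ‖v‖ < 1 := by
      have hc : ContinuousAt (fun v : ℂ => ‖v‖) W :=
        continuous_norm.continuousAt
      exact hc.eventually_lt continuousAt_const hW
    have h2 : ∀ᶠ v in nhds W, v ≠ Z := eventually_ne_nhds (Ne.symm hne)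
    filter_upwards [h1, h2] with v hv1 hv2
    have hvZ : v - Z ≠ 0 := sub_ne_zero.mpr hv2
    have hZv : Z - v ≠ 0 := sub_ne_zero.mpr (Ne.symm hv2)
    have hzc : (1 : ℂ) - Z * (starRingEnd ℂ) v ≠ 0 := one_sub_mul_conj_ne Z v hZ hv1
    have hτv : (0:ℝ) < a + ‖Z - v‖ ^ 2 := by
      have : 0 < ‖Z - v‖ := norm_pos_iff.mpr hZv
      positivity
    have hτvC : ((a + ‖Z - v‖ ^ 2 : ℝ) : ℂ) ≠ 0 :=
      Complex.ofReal_ne_zero.mpr (ne_of_gt hτv)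
    have e1 : ((‖v - Z‖ ^ 2 : ℝ) : ℂ) = (v - Z) * ((starRingEnd ℂ) v - (starRingEnd ℂ) Z) := by
      rw [absSqC, map_sub]
    have e2 : ((1 - ‖v‖ ^ 2 : ℝ) : ℂ) = 1 - v * (starRingEnd ℂ) v := by
      rw [Complex.ofReal_sub, Complex.ofReal_one, absSqC]
    have e3 : ((a + ‖Z - v‖ ^ 2 : ℝ) : ℂ)
        = (a : ℂ) + (v - Z) * ((starRingEnd ℂ) v - (starRingEnd ℂ) Z) := by
      rw [Complex.ofReal_add, norm_sub_rev, absSqC, map_sub]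
    rw [hGdef]
    simp only [kD]
    rw [e3] at hτvC
    rw [e1, e2, e3]
    field_simp
    ring
  -- differentiability of uncurried G
  have hGdiff : DifferentiableAt ℂ (fun p : ℂ × ℂ => G p.1 p.2) (W, c₀) := by
    rw [hGdef]
    show DifferentiableAt ℂ (fun p : ℂ × ℂ =>
      -((1 - p.1 * p.2) * (p.2 - (starRingEnd ℂ) Z)) /
        ((Real.pi : ℂ) * (1 - Z * p.2) * ((a : ℂ) + (p.1 - Z) * (p.2 - (starRingEnd ℂ) Z)))) (W, c₀)
    simp only [div_eq_mul_inv]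
    apply DifferentiableAt.mul
    · fun_prop
    · apply DifferentiableAt.inv
      · fun_prop
      · simp only
        refine mul_ne_zero (mul_ne_zero hπC hZc) ?_
        rw [← eτ]; exact hτC
  -- slice derivative
  have h2 : HasDerivAt (fun c : ℂ => c - (starRingEnd ℂ) Z) 1 c₀ :=
    (hasDerivAt_id c₀).sub_const _
  have h1 : HasDerivAt (fun c : ℂ => 1 - W * c) (-W) c₀ := by
    simpa using ((hasDerivAt_id c₀).const_mul W).const_sub 1
  have hN : HasDerivAt (fun c : ℂ => -((1 - W * c) * (c - (starRingEnd ℂ) Z)))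
      (-((-W) * (c₀ - (starRingEnd ℂ) Z) + (1 - W * c₀) * 1)) c₀ := (h1.mul h2).neg
  have h3 : HasDerivAt (fun c : ℂ => (Real.pi : ℂ) * (1 - Z * c)) ((Real.pi : ℂ) * (-Z)) c₀ := by
    simpa using (((hasDerivAt_id c₀).const_mul Z).const_sub 1).const_mul (Real.pi : ℂ)
  have h4 : HasDerivAt (fun c : ℂ => (a : ℂ) + (W - Z) * (c - (starRingEnd ℂ) Z))
      ((W - Z) * 1) c₀ := (h2.const_mul (W - Z)).const_add _
  have hDd : HasDerivAt (fun c : ℂ => (Real.pi : ℂ) * (1 - Z * c) * ((a : ℂ) + (W - Z) * (c - (starRingEnd ℂ) Z)))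
      ((Real.pi : ℂ) * (-Z) * ((a : ℂ) + (W - Z) * (c₀ - (starRingEnd ℂ) Z)) +
        (Real.pi : ℂ) * (1 - Z * c₀) * ((W - Z) * 1)) c₀ := h3.mul h4
  have hDd0 : (Real.pi : ℂ) * (1 - Z * c₀) * ((a : ℂ) + (W - Z) * (c₀ - (starRingEnd ℂ) Z)) ≠ 0 := by
    refine mul_ne_zero (mul_ne_zero hπC hZc) ?_
    rw [← eτ]; exact hτC
  have hg : HasDerivAt (fun c : ℂ => G W c)
      (((-((-W) * (c₀ - (starRingEnd ℂ) Z) + (1 - W * c₀) * 1)) *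
          ((Real.pi : ℂ) * (1 - Z * c₀) * ((a : ℂ) + (W - Z) * (c₀ - (starRingEnd ℂ) Z))) -
        (-((1 - W * c₀) * (c₀ - (starRingEnd ℂ) Z))) *
          ((Real.pi : ℂ) * (-Z) * ((a : ℂ) + (W - Z) * (c₀ - (starRingEnd ℂ) Z)) +
            (Real.pi : ℂ) * (1 - Z * c₀) * ((W - Z) * 1))) /
        ((Real.pi : ℂ) * (1 - Z * c₀) * ((a : ℂ) + (W - Z) * (c₀ - (starRingEnd ℂ) Z))) ^ 2) c₀ := by
    rw [hGdef]
    exact hN.div hDd hDd0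
  have heq := wbar1_formula _ G W _ hGdiff hev hg
  rw [heq]
  -- notation for the pieces
  set A : ℂ := -((-W) * (c₀ - (starRingEnd ℂ) Z) + (1 - W * c₀) * 1) with hAdef
  set N : ℂ := -((1 - W * c₀) * (c₀ - (starRingEnd ℂ) Z)) with hNdef
  set B : ℂ := (Real.pi : ℂ) * (-Z) * ((a : ℂ) + (W - Z) * (c₀ - (starRingEnd ℂ) Z)) +
      (Real.pi : ℂ) * (1 - Z * c₀) * ((W - Z) * 1) with hBdef
  set Dd : ℂ := (Real.pi : ℂ) * (1 - Z * c₀) * ((a : ℂ) + (W - Z) * (c₀ - (starRingEnd ℂ) Z))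
    with hDddef
  have habsπ : ‖((Real.pi : ℝ) : ℂ)‖ = Real.pi := by
    rw [Complex.norm_of_nonneg Real.pi_pos.le]
  have hconj : c₀ - (starRingEnd ℂ) Z = (starRingEnd ℂ) (W - Z) := by
    rw [hc₀, ← map_sub]
  have habs1 : ‖c₀ - (starRingEnd ℂ) Z‖ = s := by
    rw [hconj, Complex.norm_conj, hsdef]
  have hmC : (1 : ℂ) - W * c₀ = ((m : ℝ) : ℂ) := by
    rw [hmdef, hc₀, Complex.ofReal_sub, Complex.ofReal_one, absSqC]
  have habsm : ‖1 - W * c₀‖ = m := by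
    rw [hmC, Complex.norm_of_nonneg hm.le]
  have habsτ : ‖(a : ℂ) + (W - Z) * (c₀ - (starRingEnd ℂ) Z)‖ = τ := by
    rw [← eτ, Complex.norm_of_nonneg hτ.le]
  have hDdabs : ‖Dd‖ = Real.pi * q * τ := by
    rw [hDddef, norm_mul, norm_mul, habsπ, habsτ, hqdef]
  have hW1 : ‖W‖ ≤ 1 := le_of_lt hW
  have hZ1 : ‖Z‖ ≤ 1 := le_of_lt hZ
  have hNabs : ‖N‖ = m * s := by
    rw [hNdef, norm_neg, norm_mul, habsm, habs1]
  have hAabs : ‖A‖ ≤ s + m := by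
    rw [hAdef, norm_neg]
    calc ‖(-W) * (c₀ - (starRingEnd ℂ) Z) + (1 - W * c₀) * 1‖
        ≤ ‖(-W) * (c₀ - (starRingEnd ℂ) Z)‖ + ‖(1 - W * c₀) * 1‖ :=
          norm_add_le _ _
      _ = ‖W‖ * s + m := by
          rw [norm_mul, norm_mul, norm_neg, habs1, habsm, norm_one, mul_one]
      _ ≤ 1 * s + m := by nlinarith [norm_nonneg W]
      _ = s + m := by ring
  have hBabs : ‖B‖ ≤ Real.pi * τ + Real.pi * q * s := by
    rw [hBdef]
    calc ‖(Real.pi : ℂ) * (-Z) * ((a : ℂ) + (W - Z) * (c₀ - (starRingEnd ℂ) Z)) +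
          (Real.pi : ℂ) * (1 - Z * c₀) * ((W - Z) * 1)‖
        ≤ ‖(Real.pi : ℂ) * (-Z) * ((a : ℂ) + (W - Z) * (c₀ - (starRingEnd ℂ) Z))‖ +
          ‖(Real.pi : ℂ) * (1 - Z * c₀) * ((W - Z) * 1)‖ := norm_add_le _ _
      _ = Real.pi * ‖Z‖ * τ + Real.pi * q * s := by
          rw [norm_mul, norm_mul, norm_mul, norm_mul, norm_mul, norm_neg, habsπ, habsτ,
            norm_one, mul_one, hqdef, hsdef]
      _ ≤ Real.pi * 1 * τ + Real.pi * q * s := by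
          have := mul_le_mul_of_nonneg_right (mul_le_mul_of_nonneg_left hZ1 Real.pi_pos.le) hτ.le
          linarith
      _ = Real.pi * τ + Real.pi * q * s := by ring
  have hnum : ‖A * Dd - N * B‖ ≤
      (s + m) * (Real.pi * q * τ) + (m * s) * (Real.pi * τ + Real.pi * q * s) := by
    calc ‖A * Dd - N * B‖ ≤ ‖A * Dd‖ + ‖N * B‖ :=
          norm_sub_le _ _
      _ = ‖A‖ * ‖Dd‖ + ‖N‖ * ‖B‖ := by
          simp only [norm_mul]
      _ ≤ (s + m) * (Real.pi * q * τ) + (m * s) * (Real.pi * τ + Real.pi * q * s) := by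
          rw [hDdabs, hNabs]
          have h1 : ‖A‖ * (Real.pi * q * τ) ≤ (s + m) * (Real.pi * q * τ) := by
            apply mul_le_mul_of_nonneg_right hAabs; positivity
          have h2 : (m * s) * ‖B‖ ≤ (m * s) * (Real.pi * τ + Real.pi * q * s) := by
            apply mul_le_mul_of_nonneg_left hBabs; positivity
          linarith
  have habsZW : ‖Z - W‖ = s := by rw [norm_sub_rev, hsdef]
  clear_value A N B Dd s q m τ
  clear hev hGdiff hg hN hDd h1 h2 h3 h4 hτC hπC hZc eτ hGdef
  rw [habsZW, ← hτdef, norm_div, norm_pow, hDdabs]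
  have hs2 : s ^ 2 ≤ τ := by rw [hτdef]; linarith
  rw [div_le_div_iff₀ (by positivity) hτ]
  have hup := mul_le_mul_of_nonneg_right hnum hτ.le
  have hA' : s * (q * τ) ≤ q * (q * τ) :=
    mul_le_mul_of_nonneg_right hqs (by positivity)
  have hB' : m * (q * τ) ≤ 2 * q * (q * τ) :=
    mul_le_mul_of_nonneg_right hqm (by positivity)
  have hC' : m * (s * τ) ≤ 2 * q * (q * τ) := by
    have h0 : m * s ≤ 2 * q * q := by
      have := mul_le_mul hqm hqs hs.le (by positivity : (0:ℝ) ≤ 2 * q)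
      linarith
    have := mul_le_mul_of_nonneg_right h0 hτ.le
    linarith
  have hD' : m * (s ^ 2 * q) ≤ 2 * q * (τ * q) := by
    have h0 : m * s ^ 2 ≤ 2 * q * τ := by
      have := mul_le_mul hqm hs2 (by positivity : (0:ℝ) ≤ s ^ 2) (by positivity : (0:ℝ) ≤ 2 * q)
      linarith
    have := mul_le_mul_of_nonneg_right h0 hq.le
    linarith
  have hsum : s * (q * τ) + m * (q * τ) + m * (s * τ) + m * (s ^ 2 * q) ≤ 7 * (q * (q * τ)) := by
    linarith
  have hstep := mul_le_mul_of_nonneg_left hsum (by positivity : (0:ℝ) ≤ Real.pi * τ)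
  have hQ : (0:ℝ) < q * q * (τ * τ) := by positivity
  have hlast : 7 * Real.pi * (q * q * (τ * τ)) ≤ 7 * (Real.pi * Real.pi) * (q * q * (τ * τ)) := by
    have h0 : 7 * Real.pi ≤ 7 * (Real.pi * Real.pi) := by
      have h1 : (1:ℝ) ≤ Real.pi := by linarith
      have := mul_le_mul_of_nonneg_left h1 (by positivity : (0:ℝ) ≤ 7 * Real.pi)
      linarith
    have := mul_le_mul_of_nonneg_right h0 hQ.le
    linarith
  have hXτ : ((s + m) * (Real.pi * q * τ) + (m * s) * (Real.pi * τ + Real.pi * q * s)) * τ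
      = Real.pi * τ * (s * (q * τ) + m * (q * τ) + m * (s * τ) + m * (s ^ 2 * q)) := by ring
  have h7 : Real.pi * τ * (7 * (q * (q * τ))) = 7 * Real.pi * (q * q * (τ * τ)) := by ring
  have hgoal7 : 7 * (Real.pi * q * τ) ^ 2 = 7 * (Real.pi * Real.pi) * (q * q * (τ * τ)) := by ring
  linarith [hup, hstep, hlast]


lemma kD_bound (Z W : ℂ) (hZ : ‖Z‖ < 1) (hW : ‖W‖ < 1) (hne : Z ≠ W) :
    ‖kD Z W‖ ≤ 2 / (Real.pi * ‖Z - W‖) := by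
  have hm : 0 < 1 - ‖W‖ ^ 2 := by nlinarith [norm_nonneg W]
  have hq2 := disc_key2 Z W hZ hW
  have hq : 0 < ‖1 - Z * (starRingEnd ℂ) W‖ := by linarith
  have hs : 0 < ‖Z - W‖ := norm_pos_iff.mpr (sub_ne_zero.mpr hne)
  rw [kD, norm_div, norm_mul, norm_mul, Complex.norm_of_nonneg hm.le,
    show ‖((Real.pi : ℝ) : ℂ)‖ = Real.pi from by
      rw [Complex.norm_of_nonneg Real.pi_pos.le]]
  rw [div_le_div_iff₀ (by positivity) (by positivity)]
  have h := mul_le_mul_of_nonneg_right hq2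
    (by positivity : (0:ℝ) ≤ Real.pi * ‖Z - W‖)
  nlinarith [h]

lemma amgm (x y : ℝ) (hx : 0 ≤ x) (hy : 0 ≤ y) :
    x * Real.sqrt x * Real.sqrt y ≤ x ^ 2 + y ^ 2 := by
  have hux := Real.sq_sqrt hx
  have huy := Real.sq_sqrt hy
  set u := Real.sqrt x with hu'
  set t := Real.sqrt y with ht'
  have hu : 0 ≤ u := Real.sqrt_nonneg x
  have ht : 0 ≤ t := Real.sqrt_nonneg y
  have key : 0 ≤ (u - t) ^ 2 * (3 * u ^ 2 + 2 * u * t + t ^ 2) := by positivity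
  rw [← hux, ← huy]
  nlinarith [key, sq_nonneg (u ^ 2), sq_nonneg (t ^ 2)]

lemma rpow32 (x : ℝ) (hx : 0 < x) : x ^ ((3 : ℝ) / 2) = x * Real.sqrt x := by
  rw [show (3 : ℝ) / 2 = 1 + 1 / 2 by norm_num, Real.rpow_add hx, Real.rpow_one,
    ← Real.sqrt_eq_rpow]

/-- **Estimates (4.9) and (4.10) on the bidisc.** The auxiliary kernels `b^{1,2}`, `b^{2,1}`
satisfy `|b^{i,j}| ≤ C/τ` and
`|k(z₂,w₂) b^{2,1}| + |k(z₁,w₁) b^{1,2}| ≤ C/(|z₁-w₁|^{3/2}|z₂-w₂|^{3/2})`. -/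
theorem b_kernel_estimates_bidisc :
    ∃ C : ℝ, 0 < C ∧
      ∀ z₁ ∈ unitD, ∀ z₂ ∈ unitD, ∀ w₁ ∈ unitD, ∀ w₂ ∈ unitD,
        z₁ ≠ w₁ → z₂ ≠ w₂ →
          ‖b12 z₁ z₂ w₁ w₂‖ ≤ C / tau2 z₁ z₂ w₁ w₂ ∧
          ‖b21 z₁ z₂ w₁ w₂‖ ≤ C / tau2 z₁ z₂ w₁ w₂ ∧
          ‖kD z₂ w₂‖ * ‖b21 z₁ z₂ w₁ w₂‖ +
              ‖kD z₁ w₁‖ * ‖b12 z₁ z₂ w₁ w₂‖ ≤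
            C / (‖z₁ - w₁‖ ^ ((3 : ℝ) / 2) *
                 ‖z₂ - w₂‖ ^ ((3 : ℝ) / 2)) := by
  refine ⟨14, by norm_num, ?_⟩
  intro z₁ hz₁ z₂ hz₂ w₁ hw₁ w₂ hw₂ hne1 hne2
  have hz1 : ‖z₁‖ < 1 := by simpa [unitD, Complex.dist_eq] using hz₁
  have hz2 : ‖z₂‖ < 1 := by simpa [unitD, Complex.dist_eq] using hz₂
  have hw1 : ‖w₁‖ < 1 := by simpa [unitD, Complex.dist_eq] using hw₁
  have hw2 : ‖w₂‖ < 1 := by simpa [unitD, Complex.dist_eq] using hw₂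
  have hs1 : 0 < ‖z₁ - w₁‖ := norm_pos_iff.mpr (sub_ne_zero.mpr hne1)
  have hs2 : 0 < ‖z₂ - w₂‖ := norm_pos_iff.mpr (sub_ne_zero.mpr hne2)
  set s1 : ℝ := ‖z₁ - w₁‖ with hs1def
  set s2 : ℝ := ‖z₂ - w₂‖ with hs2def
  have hτeq : tau2 z₁ z₂ w₁ w₂ = s1 ^ 2 + s2 ^ 2 := rfl
  have hτpos : 0 < tau2 z₁ z₂ w₁ w₂ := by rw [hτeq]; positivity
  -- estimate for b12
  have hb12 : ‖b12 z₁ z₂ w₁ w₂‖ ≤ 7 / tau2 z₁ z₂ w₁ w₂ := by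
    have e : b12 z₁ z₂ w₁ w₂ = wbar1 (fun v => kD z₂ v *
        ((‖v - z₂‖ ^ 2 : ℝ) : ℂ) /
        (((‖z₁ - w₁‖ ^ 2 + ‖z₂ - v‖ ^ 2 : ℝ)) : ℂ)) w₂ := rfl
    rw [e, hτeq]
    exact master z₂ w₂ (‖z₁ - w₁‖ ^ 2) hz2 hw2 hne2 (sq_nonneg _)
  -- estimate for b21
  have hb21 : ‖b21 z₁ z₂ w₁ w₂‖ ≤ 7 / tau2 z₁ z₂ w₁ w₂ := by
    have hfun : (fun v => kD z₁ v * ((‖v - z₁‖ ^ 2 : ℝ) : ℂ) /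
        ((tau2 z₁ z₂ v w₂ : ℝ) : ℂ)) = (fun v => kD z₁ v *
        ((‖v - z₁‖ ^ 2 : ℝ) : ℂ) /
        (((‖z₂ - w₂‖ ^ 2 + ‖z₁ - v‖ ^ 2 : ℝ)) : ℂ)) := by
      funext v; rw [tau2, add_comm]
    have e : b21 z₁ z₂ w₁ w₂ = wbar1 (fun v => kD z₁ v *
        ((‖v - z₁‖ ^ 2 : ℝ) : ℂ) /
        (((‖z₂ - w₂‖ ^ 2 + ‖z₁ - v‖ ^ 2 : ℝ)) : ℂ)) w₁ := by
      rw [b21, hfun]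
    rw [e, show tau2 z₁ z₂ w₁ w₂ = ‖z₂ - w₂‖ ^ 2 + ‖z₁ - w₁‖ ^ 2 from by
      rw [tau2, add_comm]]
    exact master z₁ w₁ (‖z₂ - w₂‖ ^ 2) hz1 hw1 hne1 (sq_nonneg _)
  have h714 : (7:ℝ) / tau2 z₁ z₂ w₁ w₂ ≤ 14 / tau2 z₁ z₂ w₁ w₂ := by
    rw [div_le_div_iff₀ hτpos hτpos]; nlinarith [hτpos]
  refine ⟨hb12.trans h714, hb21.trans h714, ?_⟩
  -- third estimate
  have hk2 : ‖kD z₂ w₂‖ ≤ 2 / (Real.pi * s2) := kD_bound z₂ w₂ hz2 hw2 hne2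
  have hk1 : ‖kD z₁ w₁‖ ≤ 2 / (Real.pi * s1) := kD_bound z₁ w₁ hz1 hw1 hne1
  have hp2 : (0:ℝ) < 2 / (Real.pi * s2) := div_pos (by norm_num) (mul_pos Real.pi_pos hs2)
  have hp1 : (0:ℝ) < 2 / (Real.pi * s1) := div_pos (by norm_num) (mul_pos Real.pi_pos hs1)
  have ht1 : ‖kD z₂ w₂‖ * ‖b21 z₁ z₂ w₁ w₂‖ ≤
      (2 / (Real.pi * s2)) * (7 / tau2 z₁ z₂ w₁ w₂) :=
    mul_le_mul hk2 hb21 (norm_nonneg _) hp2.le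
  have ht2 : ‖kD z₁ w₁‖ * ‖b12 z₁ z₂ w₁ w₂‖ ≤
      (2 / (Real.pi * s1)) * (7 / tau2 z₁ z₂ w₁ w₂) :=
    mul_le_mul hk1 hb12 (norm_nonneg _) hp1.le
  rw [rpow32 s1 hs1, rpow32 s2 hs2]
  have hr1 : 0 < Real.sqrt s1 := Real.sqrt_pos.mpr hs1
  have hr2 : 0 < Real.sqrt s2 := Real.sqrt_pos.mpr hs2
  have hXpos : 0 < s1 * Real.sqrt s1 * (s2 * Real.sqrt s2) := by positivity
  have h147 : (14:ℝ) ≤ 7 * Real.pi := by nlinarith [Real.pi_gt_three]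
  have key1 : (2 / (Real.pi * s2)) * (7 / tau2 z₁ z₂ w₁ w₂) ≤
      7 / (s1 * Real.sqrt s1 * (s2 * Real.sqrt s2)) := by
    rw [div_mul_div_comm, div_le_div_iff₀ (by positivity) hXpos]
    rw [hτeq]
    have am := amgm s1 s2 hs1.le hs2.le
    have c1 := mul_le_mul_of_nonneg_left am (by positivity : (0:ℝ) ≤ 14 * s2)
    have hpos : (0:ℝ) ≤ s2 * (s1 ^ 2 + s2 ^ 2) := by positivity
    have c2 := mul_le_mul_of_nonneg_right h147 hpos
    nlinarith [c1, c2]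
  have key2 : (2 / (Real.pi * s1)) * (7 / tau2 z₁ z₂ w₁ w₂) ≤
      7 / (s1 * Real.sqrt s1 * (s2 * Real.sqrt s2)) := by
    rw [div_mul_div_comm, div_le_div_iff₀ (by positivity) hXpos]
    rw [hτeq]
    have am := amgm s2 s1 hs2.le hs1.le
    have c1 := mul_le_mul_of_nonneg_left am (by positivity : (0:ℝ) ≤ 14 * s1)
    have hpos : (0:ℝ) ≤ s1 * (s1 ^ 2 + s2 ^ 2) := by positivity
    have c2 := mul_le_mul_of_nonneg_right h147 hpos
    nlinarith [c1, c2]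
  have hsum := add_le_add (ht1.trans key1) (ht2.trans key2)
  have heq : 7 / (s1 * Real.sqrt s1 * (s2 * Real.sqrt s2)) +
      7 / (s1 * Real.sqrt s1 * (s2 * Real.sqrt s2)) =
      14 / (s1 * Real.sqrt s1 * (s2 * Real.sqrt s2)) := by ring
  exact hsum.trans (le_of_eq heq)

end
end
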